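/- In the coupled-curve setting below, assume e^{lambda} > 3. Then there exists a constant c_3 > 0, depending only on kappa, beta, a, lambda, c' and the flows g_1, g_2, such that for every n >= 0, every i = 1,2, and every xi > 0: (1/(e^{lambda n} a)) * m{ u in [0, e^{lambda n} a] : dist(psi_n^i(u), {0, 1/2}) <= xi } <= c_3 * xi, where m denotes Lebesgue measure and dist is the quotient metric on T. -/

import Mathlib

/-!
Cut `[0, e^{λn} a]` into pieces on which both coordinates of `θ_n` have continuous
nondecreasing lifts. On a piece, the lift of `ψ_n^i` is that of `θ_n^i` plus the lift of
`r_i ∘ ι_n`, so it increases at rate at least `β c'`: for each half-integer `m/2` it reaches,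
the points where it is `ξ`-close to `m/2` have measure at most `2ξ/(βc')`. The cost of a piece
is the number of half-integers crossed by its two lifts, plus one.

Cutting a piece further at these crossings makes `τ ∘ ψ_n` constant on each part, and `g_i^τ`
fixes `0` and `1/2`, hence keeps every lift in its half-cell `[m/2, (m+1)/2]`; rescaling by `e^λ`
yields pieces of `θ_{n+1}`. Counting crossings through the half-cells shows that the total cost
at most triples, up to the number of half-integers crossed by the lifts of `r_i ∘ ι_{n+1}`,
which is linear in the length `e^{λ(n+1)} a`. As `e^λ > 3`, the total cost is therefore
`O(e^{λn})`, and summing the measure bound over pieces and half-integers gives `c₃ ξ e^{λn} a`.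
-/

noncomputable section

open Real Set Filter Topology MeasureTheory
open scoped Classical

instance factOneLtZero : Fact ((0:ℝ) < 1) := ⟨zero_lt_one⟩

/-- The circle `𝕋 = ℝ/ℤ`. -/
abbrev Circ : Type := AddCircle (1 : ℝ)

/-- The projection `ℝ → 𝕋`. -/
def coeT (x : ℝ) : Circ := (x : Circ)

/-- The representative of a point of `𝕋` in `[0,1)` (identification of `𝕋` with `[0,1)`). -/
def rep (z : Circ) : ℝ := (AddCircle.equivIco 1 0 z : ℝ)

/-- `f : ℝ → 𝕋` has derivative `d` at `u`, computed via a local lift. -/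
def HasCircDerivAt (f : ℝ → Circ) (d : ℝ) (u : ℝ) : Prop :=
  ∃ F : ℝ → ℝ, (∀ᶠ v in nhds u, coeT (F v) = f v) ∧ HasDerivAt F d u

/-- `f : ℝ → 𝕋` is `C¹` on a neighborhood of `u` (via a local lift). -/
def IsC1At (f : ℝ → Circ) (u : ℝ) : Prop :=
  ∃ (F : ℝ → ℝ) (ε : ℝ), 0 < ε ∧ (∀ v ∈ Ioo (u - ε) (u + ε), coeT (F v) = f v) ∧
    ContDiffOn ℝ 1 F (Ioo (u - ε) (u + ε))

/-- `f : ℝ → 𝕋` is continuous and monotonically increasing on a neighborhood of `u`,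
i.e. admits a continuous nondecreasing local lift there. -/
def ContMonoNear (f : ℝ → Circ) (u : ℝ) : Prop :=
  ∃ (F : ℝ → ℝ) (ε : ℝ), 0 < ε ∧ (∀ v ∈ Ioo (u - ε) (u + ε), coeT (F v) = f v) ∧
    ContinuousOn F (Ioo (u - ε) (u + ε)) ∧ MonotoneOn F (Ioo (u - ε) (u + ε))

/-- `f : ℝ → 𝕋` is `C¹` on a neighborhood of `u`, except possibly at `u` itself. -/
def C1StarNear (f : ℝ → Circ) (u : ℝ) : Prop :=
  ∃ ε : ℝ, 0 < ε ∧ ∀ v ∈ Ioo (u - ε) (u + ε), v ≠ u → IsC1At f v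

/-- The number of the coordinates of `z = (z₁, z₂) ∈ 𝕋²` lying in the arc `(1/2, 1)`. -/
def cnt (z : Circ × Circ) : ℕ :=
  (if 1/2 < rep z.1 then 1 else 0) + (if 1/2 < rep z.2 then 1 else 0)

/-- The basic data of the model with `N = 2` inhibitory components: the constants
`λ, b, c, κ, c', a, β`, the function `Φ`, the (lifted) North-South flows `G i` generated by
the (lifted) `C²` vector fields `V i` vanishing exactly at `0` and `1/2` (mod 1), the arcs
`I_i^±` (via `δ_i^±`), and assumptions (A1)-(A2). -/
structure Base where
  lam : ℝ
  b : ℝ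
  c : ℝ
  kappa : ℕ
  c' : ℝ
  a : ℝ
  beta : ℝ
  lam_pos : 0 < lam
  b_mem : b ∈ Ioo (0:ℝ) 1
  c_mem : c ∈ Ioo (0:ℝ) 1
  kappa_pos : 0 < kappa
  c'_pos : 0 < c'
  a_pos : 0 < a
  beta_pos : 0 < beta
  /-- the feedback strength function `Φ : {0,1,2} → [0,1)` -/
  Phi : ℕ → ℝ
  Phi_zero : Phi 0 = 0
  Phi_mono : ∀ m n : ℕ, m < n → n ≤ 2 → Phi m < Phi n
  Phi_nonneg : ∀ n ≤ 2, 0 ≤ Phi n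
  Phi_lt_one : ∀ n ≤ 2, Phi n < 1
  /-- lifts of the vector fields generating the North-South flows -/
  V : Fin 2 → ℝ → ℝ
  /-- lifts of the North-South flows `g_i^t` -/
  G : Fin 2 → ℝ → ℝ → ℝ
  V_smooth : ∀ i, ContDiff ℝ 2 (V i)
  V_periodic : ∀ i x, V i (x + 1) = V i x
  V_zero_iff : ∀ i x, V i x = 0 ↔ ∃ n : ℤ, x = n ∨ x = n + 1/2
  V_deriv_zero_neg : ∀ i, deriv (V i) 0 < 0
  V_deriv_half_pos : ∀ i, 0 < deriv (V i) (1/2)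
  G_zero : ∀ i x, G i 0 x = x
  G_add : ∀ i s t x, G i (s + t) x = G i s (G i t x)
  G_periodic : ∀ i t x, G i t (x + 1) = G i t x + 1
  G_ode : ∀ i x t, HasDerivAt (fun s => G i s x) (V i (G i t x)) t
  /-- half-width of the arc `I_i^+` around the N-pole `1/2` -/
  deltaP : Fin 2 → ℝ
  /-- half-width of the arc `I_i^-` around the S-pole `0` -/
  deltaM : Fin 2 → ℝ
  deltaP_pos : ∀ i, 0 < deltaP i
  deltaM_pos : ∀ i, 0 < deltaM i
  /-- (A1), expansion part: `(g_i^t)' > e^λ` on `I_i^+` for `1-b ≤ t ≤ τ_max` -/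
  A1_exp : ∀ i, ∀ t ∈ Icc (1 - b) ((1 - b) * (1 - Phi 2)⁻¹),
    ∀ x ∈ Icc (1/2 - deltaP i) (1/2 + deltaP i), Real.exp lam < deriv (G i t) x
  /-- (A1), contraction part: `(g_i^t)' ≤ c` on `I_i^-` for `1-b ≤ t ≤ τ_max` -/
  A1_con : ∀ i, ∀ t ∈ Icc (1 - b) ((1 - b) * (1 - Phi 2)⁻¹),
    ∀ x ∈ Icc (-(deltaM i)) (deltaM i), deriv (G i t) x ≤ c
  /-- (A2): `g_i^t(I_i^+) ⊇ 𝕋 \ I_i^-` for `1-b ≤ t ≤ τ_max` -/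
  A2 : ∀ i, ∀ t ∈ Icc (1 - b) ((1 - b) * (1 - Phi 2)⁻¹),
    (coeT '' Icc (-(deltaM i)) (deltaM i))ᶜ ⊆
      (fun x => coeT (G i t x)) '' Icc (1/2 - deltaP i) (1/2 + deltaP i)

namespace Base

variable (B : Base)

/-- The maximal return time `τ_max = (1-b)(1-Φ(2))⁻¹`. -/
def tauMax : ℝ := (1 - B.b) * (1 - B.Phi 2)⁻¹

/-- The return time `τ(z₁,z₂) = (1-b)(1-Φ(#{i : z_i ∈ (1/2,1)}))⁻¹` from `Σ_b` to `Σ₀`. -/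
def tauT (z : Circ × Circ) : ℝ := (1 - B.b) * (1 - B.Phi (cnt z))⁻¹

/-- The North-South flow `g_i^t` on the circle. -/
def gT (i : Fin 2) (t : ℝ) (z : Circ) : Circ := coeT (B.G i t (rep z))

/-- The arc `I_i^+ = [1/2 - δ_i^+, 1/2 + δ_i^+] ⊆ 𝕋`. -/
def IiP (i : Fin 2) : Set Circ := coeT '' Icc (1/2 - B.deltaP i) (1/2 + B.deltaP i)

/-- The arc `I_i^- = [-δ_i^-, δ_i^-] ⊆ 𝕋`. -/
def IiM (i : Fin 2) : Set Circ := coeT '' Icc (-(B.deltaM i)) (B.deltaM i)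

/-- `d_i = dist(∂ I_i^-, ∂ g_i^{1-b}(I_i^+))`. -/
def dd (i : Fin 2) : ℝ :=
  sInf {r : ℝ | ∃ x ∈ frontier (B.IiM i),
    ∃ y ∈ frontier ((B.gT i (1 - B.b)) '' (B.IiP i)), r = dist x y}

end Base

/-- The full data of the model with `N = 2`: the base data together with `ε`, the lifted
rotation maps `R i` (local diffeomorphisms `r_i` of the circle of degree `deg i ≤ κ`)
satisfying (A3)-(A4), and the base points `x0 n` of the iterated curves. -/
structure Setting extends Base where
  eps : ℝ
  eps_pos : 0 < eps
  /-- lifts of the rotation maps `r_i : 𝕋 → 𝕋` -/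
  R : Fin 2 → ℝ → ℝ
  /-- the degrees of the `r_i` -/
  deg : Fin 2 → ℕ
  R_smooth : ∀ i, ContDiff ℝ 2 (R i)
  R_equiv : ∀ i x, R i (x + 1) = R i x + deg i
  deg_ge_one : ∀ i, 1 ≤ deg i
  deg_le_kappa : ∀ i, deg i ≤ toBase.kappa
  R_deriv_pos : ∀ i x, 0 < deriv (R i) x
  /-- (A3): `r_i' > ε⁻¹` wherever `r_i ∈ [d_i, 1 - d_i]` -/
  A3 : ∀ i x, rep (coeT (R i x)) ∈ Icc (toBase.dd i) (1 - toBase.dd i) →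
    eps⁻¹ < deriv (R i) x
  /-- (A4): `r_i' > c'` everywhere -/
  A4 : ∀ i x, toBase.c' < deriv (R i) x
  /-- the `x`-coordinates `x_n = π_x(γ_n(0))` determining `ι_n` -/
  x0 : ℕ → ℝ

namespace Setting

variable (S : Setting)

/-- The rotation map `r_i : 𝕋 → 𝕋`. -/
def rT (i : Fin 2) (z : Circ) : Circ := coeT (S.R i (rep z))

/-- `ι_n(u) = β u + x_n (mod 1)`. -/
def iota (n : ℕ) (u : ℝ) : Circ := coeT (S.toBase.beta * u + S.x0 n)

/-- `Φ₁`-image of a curve: `ψ(u) = θ(u) + (r₁(ι_n(u)), r₂(ι_n(u)))`. -/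
def psiOf (th : ℝ → Circ × Circ) (n : ℕ) (u : ℝ) : Circ × Circ :=
  ((th u).1 + S.rT 0 (S.iota n u), (th u).2 + S.rT 1 (S.iota n u))

/-- `Φ₂∘Φ₁`-image of a curve: `ζ(u) = (g₁^{τ(ψ(u))}(ψ¹(u)), g₂^{τ(ψ(u))}(ψ²(u)))`. -/
def zetaOf (th : ℝ → Circ × Circ) (n : ℕ) (u : ℝ) : Circ × Circ :=
  (S.toBase.gT 0 (S.toBase.tauT (S.psiOf th n u)) (S.psiOf th n u).1,
   S.toBase.gT 1 (S.toBase.tauT (S.psiOf th n u)) (S.psiOf th n u).2)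

/-- The iterated curves `θ_n`: `θ_0 ≡ (0,0)` and `θ_{n+1}(u) = ζ_n(e^{-λ} u)`. -/
def theta : ℕ → ℝ → Circ × Circ
  | 0 => fun _ => (0, 0)
  | n + 1 => fun u => S.zetaOf (theta n) n (Real.exp (-S.toBase.lam) * u)

/-- The curves `ψ_n`. -/
def psi (n : ℕ) (u : ℝ) : Circ × Circ := S.psiOf (S.theta n) n u

/-- The curves `ζ_n`. -/
def zeta (n : ℕ) (u : ℝ) : Circ × Circ := S.zetaOf (S.theta n) n u

/-- The component `ψ_n^i`. -/
def psiI (n : ℕ) (i : Fin 2) (u : ℝ) : Circ :=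
  if i = 0 then (S.psi n u).1 else (S.psi n u).2

/-- The component `ζ_n^i`. -/
def zetaI (n : ℕ) (i : Fin 2) (u : ℝ) : Circ :=
  if i = 0 then (S.zeta n u).1 else (S.zeta n u).2

/-- The length `e^{λ n} a` of the domain of the curves at step `n`. -/
def len (n : ℕ) : ℝ := Real.exp (S.toBase.lam * n) * S.toBase.a

end Setting

section Flow

variable {g : ℝ → ℝ → ℝ}

theorem flow_strictMono (h0 : ∀ x, g 0 x = x) (hadd : ∀ s t x, g (s + t) x = g s (g t x))
    (hcont : ∀ x, Continuous (g · x)) (t : ℝ) : StrictMono (g t) := by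
  have hinj : ∀ s, Function.Injective (g s) := fun s =>
    Function.LeftInverse.injective (g := g (-s)) fun x => by rw [← hadd, neg_add_cancel, h0]
  intro x y hxy
  by_contra! hle
  -- `s ↦ g s y - g s x` never vanishes, is positive at `0` and nonpositive at `t`
  have hc : ContinuousOn (fun s => g s y - g s x) (uIcc 0 t) :=
    ((hcont y).sub (hcont x)).continuousOn
  obtain ⟨s, -, hs⟩ := intermediate_value_uIcc hc
    (show (0 : ℝ) ∈ uIcc (g 0 y - g 0 x) (g t y - g t x) from
      Set.mem_uIcc.2 (Or.inr ⟨by linarith, by rw [h0, h0]; linarith⟩))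
  exact hxy.ne (hinj s (sub_eq_zero.mp hs).symm)

theorem flow_surjective (h0 : ∀ x, g 0 x = x) (hadd : ∀ s t x, g (s + t) x = g s (g t x))
    (t : ℝ) : Function.Surjective (g t) :=
  fun y => ⟨g (-t) y, by rw [← hadd, add_neg_cancel, h0]⟩

theorem flow_apply_eq_self_of_eq_zero {v : ℝ → ℝ} (hv : ContDiff ℝ 1 v)
    (hode : ∀ x t, HasDerivAt (g · x) (v (g t x)) t) (h0 : ∀ x, g 0 x = x)
    {x₀ : ℝ} (hx₀ : v x₀ = 0) (t : ℝ) : g t x₀ = x₀ := by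
  set T := |t| + 1
  have hcont : Continuous (g · x₀) :=
    continuous_iff_continuousAt.2 fun s => (hode x₀ s).continuousAt
  set K := (g · x₀) '' Icc (-T) T
  have hK : IsCompact K := isCompact_Icc.image hcont
  have hT : 0 < T := by positivity
  have hx₀K : x₀ ∈ K := ⟨0, ⟨by linarith, hT.le⟩, h0 x₀⟩
  obtain ⟨L, hL⟩ :=
    (hv.locallyLipschitz.locallyLipschitzOn (s := K)).exists_lipschitzOnWith_of_compact hK
  have key := ODE_solution_unique_of_mem_Icc (v := fun _ => v) (s := fun _ => K) (t₀ := 0)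
    (f := (g · x₀)) (g := fun _ => x₀) (fun _ _ => hL)
    ⟨by linarith, hT⟩ hcont.continuousOn (fun s _ => hode x₀ s)
    (fun s hs => ⟨s, Ioo_subset_Icc_self hs, rfl⟩) continuousOn_const
    (fun s _ => by simpa [hx₀] using hasDerivAt_const s x₀) (fun _ _ => hx₀K) (h0 x₀)
  exact key ⟨by linarith [neg_abs_le t], by linarith [le_abs_self t]⟩

end Flow

theorem floor_two_mul_eq_of_fix_halfInt {f : ℝ → ℝ} (hf : StrictMono f)
    (hfix : ∀ m : ℤ, f (m / 2) = m / 2) (x : ℝ) : ⌊2 * f x⌋ = ⌊2 * x⌋ := by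
  set m := ⌊2 * x⌋
  have h1 : (m : ℝ) / 2 ≤ x := by linarith [Int.floor_le (2 * x)]
  have h2 : x < ((m + 1 : ℤ) : ℝ) / 2 := by push_cast; linarith [Int.lt_floor_add_one (2 * x)]
  have h3 := hf.monotone h1
  have h4 := hf h2
  rw [hfix] at h3 h4
  rw [Int.floor_eq_iff]
  push_cast at h4
  constructor <;> linarith

theorem ceil_two_mul_eq_of_fix_halfInt {f : ℝ → ℝ} (hf : StrictMono f)
    (hfix : ∀ m : ℤ, f (m / 2) = m / 2) (x : ℝ) : ⌈2 * f x⌉ = ⌈2 * x⌉ := by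
  set m := ⌈2 * x⌉
  have h1 : x ≤ (m : ℝ) / 2 := by linarith [Int.le_ceil (2 * x)]
  have h2 : ((m - 1 : ℤ) : ℝ) / 2 < x := by push_cast; linarith [Int.ceil_lt_add_one (2 * x)]
  have h3 := hf.monotone h1
  have h4 := hf h2
  rw [hfix] at h3 h4
  rw [Int.ceil_eq_iff]
  push_cast at h4
  constructor <;> linarith

theorem floor_add_le_ceil_add_floor (a b : ℝ) : ⌊a + b⌋ ≤ ⌈a⌉ + ⌊b⌋ := by
  rw [← Int.floor_intCast_add]
  exact Int.floor_mono (by linarith [Int.le_ceil a])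

theorem map_add_intCast_of_map_add_one {f : ℝ → ℝ} {d : ℝ} (h : ∀ x, f (x + 1) = f x + d)
    (x : ℝ) (m : ℤ) : f (x + m) = f x + m * d := by
  induction m using Int.induction_on with
  | zero => simp
  | succ k ih => push_cast at ih ⊢; rw [← add_assoc, h, ih]; ring
  | pred k ih =>
    have := h (x + (-k - 1 : ℤ))
    push_cast at ih this ⊢
    rw [show x + (-k - 1) + 1 = x + -k by ring, ih] at this
    linarith

theorem sub_le_of_monotone_of_map_add_one {f : ℝ → ℝ} {d : ℝ} (hf : Monotone f) (hd : 0 ≤ d)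
    (h : ∀ x, f (x + 1) = f x + d) (u v : ℝ) :
    f v - f u ≤ d * (v - u + 1) := by
  have hceil : (⌈v - u⌉ : ℝ) ≤ v - u + 1 := (Int.ceil_lt_add_one _).le
  have := hf (show v ≤ u + ⌈v - u⌉ by linarith [Int.le_ceil (v - u)])
  rw [map_add_intCast_of_map_add_one h] at this
  nlinarith

theorem floor_eq_floor_of_forall_ne_intCast {h : ℝ → ℝ} {v w : ℝ} (hvw : v ≤ w)
    (hh : ContinuousOn h (Icc v w)) (hne : ∀ x ∈ Icc v w, ∀ m : ℤ, h x ≠ m) :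
    ⌊h v⌋ = ⌊h w⌋ := by
  rcases lt_trichotomy ⌊h v⌋ ⌊h w⌋ with hlt | heq | hlt
  · obtain ⟨x, hx, hxm⟩ := intermediate_value_Icc hvw hh
      ⟨(Int.lt_iff_add_one_le.mpr hlt |> Int.cast_le.mpr |>.trans' (by
        push_cast; exact (Int.lt_floor_add_one _).le)), Int.floor_le (h w)⟩
    exact (hne x hx _ hxm).elim
  · exact heq
  · obtain ⟨x, hx, hxm⟩ := intermediate_value_Icc' hvw hh
      ⟨(Int.lt_iff_add_one_le.mpr hlt |> Int.cast_le.mpr |>.trans' (by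
        push_cast; exact (Int.lt_floor_add_one _).le)), Int.floor_le (h v)⟩
    exact (hne x hx _ hxm).elim

theorem finite_and_ncard_halfInt_preimage_le {h : ℝ → ℝ} {s e : ℝ} (hse : s ≤ e)
    (hh : StrictMonoOn h (Icc s e)) :
    {u ∈ Ioo s e | ∃ m : ℤ, 2 * h u = m}.Finite ∧
      ({u ∈ Ioo s e | ∃ m : ℤ, 2 * h u = m}.ncard : ℤ) ≤ ⌊2 * h e⌋ - ⌊2 * h s⌋ := by
  set A := {u ∈ Ioo s e | ∃ m : ℤ, 2 * h u = m}
  have hfloor : ∀ u ∈ A, (⌊2 * h u⌋ : ℝ) = 2 * h u := by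
    rintro u ⟨-, m, hm⟩; rw [hm, Int.floor_intCast]
  have hmaps : MapsTo (fun u => ⌊2 * h u⌋) A (Finset.Ioc ⌊2 * h s⌋ ⌊2 * h e⌋ : Set ℤ) := by
    intro u hu
    have hu' := Ioo_subset_Icc_self hu.1
    have h1 := hh (left_mem_Icc.2 (hu'.1.trans hu'.2)) hu' hu.1.1
    have h2 := hh hu' (right_mem_Icc.2 (hu'.1.trans hu'.2)) hu.1.2
    have := hfloor u hu
    simp only [Finset.coe_Ioc, mem_Ioc]
    constructor
    · exact (Int.cast_lt (R := ℝ)).mp (by linarith [Int.floor_le (2 * h s)])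
    · exact Int.le_floor.mpr (by linarith)
  have hinj : InjOn (fun u => ⌊2 * h u⌋) A := by
    intro u hu v hv huv
    refine hh.injOn (Ioo_subset_Icc_self hu.1) (Ioo_subset_Icc_self hv.1) ?_
    have := congrArg (fun k : ℤ => (k : ℝ)) huv
    simp only [hfloor u hu, hfloor v hv] at this
    linarith
  refine ⟨Finite.of_injOn hmaps hinj (Finset.finite_toSet _), ?_⟩
  have := ncard_le_ncard_of_injOn _ hmaps hinj (Finset.finite_toSet _)
  rw [ncard_coe_finset, Int.card_Ioc] at this
  have := Int.floor_mono (mul_le_mul_of_nonneg_left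
    (hh.monotoneOn (left_mem_Icc.2 hse) (right_mem_Icc.2 hse) hse) zero_le_two)
  omega

theorem volume_abs_sub_le_le {f : ℝ → ℝ} {s : Set ℝ} {c : ℝ} (hc : 0 < c)
    (hf : ∀ u ∈ s, ∀ v ∈ s, u ≤ v → c * (v - u) ≤ f v - f u) (y ξ : ℝ) :
    volume {u ∈ s | |f u - y| ≤ ξ} ≤ ENNReal.ofReal (2 * ξ / c) := by
  refine (Real.volume_le_diam _).trans (Metric.ediam_le fun u hu v hv => ?_)
  rw [edist_dist, Real.dist_eq]
  refine ENNReal.ofReal_le_ofReal ?_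
  rw [le_div_iff₀ hc]
  have hu' := abs_le.mp hu.2
  have hv' := abs_le.mp hv.2
  rcases le_total u v with huv | huv
  · rw [abs_of_nonpos (by linarith)]; linarith [hf u hu.1 v hv.1 huv]
  · rw [abs_of_nonneg (by linarith)]; linarith [hf v hv.1 u hu.1 huv]

theorem measure_biUnion_list_le_ofReal {α ι : Type*} [MeasurableSpace α] (μ : Measure α)
    (L : List ι) (A : ι → Set α) (w : ι → ℝ) (hw : ∀ i ∈ L, 0 ≤ w i)
    (hA : ∀ i ∈ L, μ (A i) ≤ ENNReal.ofReal (w i)) :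
    μ (⋃ i ∈ L, A i) ≤ ENNReal.ofReal (L.map w).sum := by
  induction L with
  | nil => simp
  | cons j L ih =>
    simp only [List.mem_cons, iUnion_iUnion_eq_or_left, List.map_cons, List.sum_cons,
      forall_eq_or_imp] at hw hA ⊢
    rw [ENNReal.ofReal_add hw.1 (List.sum_nonneg (by simpa using hw.2))]
    exact (measure_union_le _ _).trans (add_le_add hA.1 (ih hw.2 hA.2))

theorem exp_neg_mul_mem_Icc {l s e w : ℝ} (hw : w ∈ Icc (Real.exp l * s) (Real.exp l * e)) :
    Real.exp (-l) * w ∈ Icc s e := by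
  rw [Real.exp_neg, inv_mul_eq_div]
  exact ⟨(le_div_iff₀ (Real.exp_pos l)).2 (by linarith [hw.1]),
    (div_le_iff₀ (Real.exp_pos l)).2 (by linarith [hw.2])⟩

theorem exp_neg_mul_mem_Ioo {l s e w : ℝ} (hw : w ∈ Ioo (Real.exp l * s) (Real.exp l * e)) :
    Real.exp (-l) * w ∈ Ioo s e := by
  rw [Real.exp_neg, inv_mul_eq_div]
  exact ⟨(lt_div_iff₀ (Real.exp_pos l)).2 (by linarith [hw.1]),
    (div_lt_iff₀ (Real.exp_pos l)).2 (by linarith [hw.2])⟩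

theorem coeT_add_intCast (x : ℝ) (m : ℤ) : coeT (x + m) = coeT x := by
  simp [coeT]

theorem rep_coeT (x : ℝ) : rep (coeT x) = Int.fract x := by
  have h := AddCircle.coe_equivIco_mk_apply (p := (1 : ℝ)) x
  rwa [div_one, mul_one] at h

theorem exists_abs_sub_halfInt_le {x ξ : ℝ}
    (h : dist (coeT x) (coeT 0) ≤ ξ ∨ dist (coeT x) (coeT (1 / 2)) ≤ ξ) :
    ∃ m : ℤ, |x - m / 2| ≤ ξ := by
  have hdist : ∀ c, dist (coeT x) (coeT c) = |x - c - round (x - c)| := fun c => by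
    rw [dist_eq_norm, coeT, coeT, ← AddCircle.coe_sub, AddCircle.norm_eq]; simp
  rcases h with h | h <;> rw [hdist] at h
  · exact ⟨2 * round (x - 0), by push_cast; simpa using h⟩
  · exact ⟨2 * round (x - 1 / 2) + 1, by push_cast; convert h using 2; ring⟩

theorem half_lt_fract_iff_odd_floor {x : ℝ} (hx : ∀ m : ℤ, 2 * x ≠ m) :
    1 / 2 < Int.fract x ↔ Odd ⌊2 * x⌋ := by
  have hsplit : 2 * x = 2 * Int.fract x + ((2 * ⌊x⌋ : ℤ) : ℝ) := by
    rw [Int.fract]; push_cast; ring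
  have hfl : ⌊2 * x⌋ = ⌊2 * Int.fract x⌋ + 2 * ⌊x⌋ := by rw [hsplit, Int.floor_add_intCast]
  have h0 := Int.fract_nonneg x
  have h1 := Int.fract_lt_one x
  have hhalf : Int.fract x ≠ 1 / 2 := fun h => hx (1 + 2 * ⌊x⌋) (by
    rw [hsplit, h]; push_cast; ring)
  rcases hhalf.lt_or_gt with h | h
  · have : ⌊2 * Int.fract x⌋ = 0 := by rw [Int.floor_eq_iff]; push_cast; constructor <;> linarith
    rw [hfl, this, zero_add]
    simp only [h.not_gt, false_iff, Int.not_odd_iff_even, even_two_mul]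
  · have : ⌊2 * Int.fract x⌋ = 1 := by rw [Int.floor_eq_iff]; push_cast; constructor <;> linarith
    rw [hfl, this, add_comm]
    exact iff_of_true h (odd_two_mul_add_one _)

def coord (i : Fin 2) (z : Circ × Circ) : Circ := if i = 0 then z.1 else z.2

structure Piece where
  s : ℝ
  e : ℝ
  F : Fin 2 → ℝ → ℝ

namespace Piece

def Spans : List Piece → ℝ → ℝ → Prop
  | [], a, b => a = b
  | P :: L, a, b => P.s = a ∧ Spans L P.e b

theorem Spans.append {L M : List Piece} {a b c : ℝ} (hL : Spans L a b) (hM : Spans M b c) :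
    Spans (L ++ M) a c := by
  induction L generalizing a with
  | nil => exact (hL ▸ hM :)
  | cons P L ih => exact ⟨hL.1, ih hL.2⟩

theorem Spans.Icc_subset {L : List Piece} {a b : ℝ} (hL : Spans L a b) :
    Icc a b ⊆ {x | x ∈ b :: L.map Piece.s} ∪ ⋃ P ∈ L, Ioo P.s P.e := by
  induction L generalizing a with
  | nil =>
    rintro u ⟨h1, h2⟩
    have hab : a = b := hL
    left
    simp only [List.map_nil, List.mem_singleton, mem_ofPred_eq]
    linarith
  | cons P L ih =>
    rintro u ⟨h1, h2⟩
    obtain ⟨rfl, hL⟩ := hL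
    rcases h1.eq_or_lt with rfl | h1
    · exact Or.inl (by simp)
    rcases lt_or_ge u P.e with h3 | h3
    · exact Or.inr (mem_biUnion (List.mem_cons_self) ⟨h1, h3⟩)
    rcases ih hL ⟨h3, h2⟩ with h | h
    · left; simp only [List.map_cons, List.mem_cons, mem_ofPred_eq] at h ⊢; tauto
    · obtain ⟨Q, hQ, hu⟩ := mem_iUnion₂.mp h
      exact Or.inr (mem_biUnion (List.mem_cons_of_mem P hQ) hu)

end Piece

namespace Base

variable (B : Base)

theorem G_add_intCast (i : Fin 2) (t x : ℝ) (m : ℤ) : B.G i t (x + m) = B.G i t x + m := by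
  simpa using map_add_intCast_of_map_add_one (d := 1) (B.G_periodic i t) x m

theorem G_strictMono (i : Fin 2) (t : ℝ) : StrictMono (B.G i t) :=
  flow_strictMono (B.G_zero i) (B.G_add i)
    (fun x => continuous_iff_continuousAt.2 fun s => (B.G_ode i x s).continuousAt) t

theorem G_continuous (i : Fin 2) (t : ℝ) : Continuous (B.G i t) :=
  (B.G_strictMono i t).monotone.continuous_of_surjective
    (flow_surjective (B.G_zero i) (B.G_add i) t)

theorem G_halfInt (i : Fin 2) (t : ℝ) (m : ℤ) : B.G i t (m / 2) = m / 2 := by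
  refine flow_apply_eq_self_of_eq_zero ((B.V_smooth i).of_le (by norm_num)) (B.G_ode i)
    (B.G_zero i) ((B.V_zero_iff i _).2 ?_) t
  obtain ⟨k, rfl | rfl⟩ := Int.even_or_odd' m
  · exact ⟨k, Or.inl (by push_cast; ring)⟩
  · exact ⟨k, Or.inr (by push_cast; ring)⟩

theorem le_floor_two_mul_G_add (i : Fin 2) (t x r : ℝ) :
    ⌊2 * x⌋ + ⌊2 * r⌋ ≤ ⌊2 * (B.G i t x + r)⌋ := by
  rw [mul_add, ← floor_two_mul_eq_of_fix_halfInt (B.G_strictMono i t) (B.G_halfInt i t) x]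
  exact Int.le_floor_add _ _

theorem floor_two_mul_G_add_le (i : Fin 2) (t x r : ℝ) :
    ⌊2 * (B.G i t x + r)⌋ ≤ ⌈2 * x⌉ + ⌊2 * r⌋ := by
  rw [mul_add, ← ceil_two_mul_eq_of_fix_halfInt (B.G_strictMono i t) (B.G_halfInt i t) x]
  exact floor_add_le_ceil_add_floor _ _

theorem gT_coeT (i : Fin 2) (t x : ℝ) : B.gT i t (coeT x) = coeT (B.G i t x) := by
  rw [gT, rep_coeT, Int.fract, sub_eq_add_neg, ← Int.cast_neg, G_add_intCast, coeT_add_intCast]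

end Base

namespace Setting

variable (S : Setting)

/-- Lift of `r_i ∘ ι_n`. -/
def rho (n : ℕ) (i : Fin 2) (u : ℝ) : ℝ := S.R i (S.beta * u + S.x0 n)

theorem rT_iota (n : ℕ) (i : Fin 2) (u : ℝ) : S.rT i (S.iota n u) = coeT (S.rho n i u) := by
  rw [rT, iota, rep_coeT, Int.fract, sub_eq_add_neg, ← Int.cast_neg,
    map_add_intCast_of_map_add_one (S.R_equiv i), ← Int.cast_natCast, ← Int.cast_mul,
    coeT_add_intCast, rho]

theorem rho_sub_ge (n : ℕ) (i : Fin 2) {u v : ℝ} (huv : u ≤ v) :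
    S.beta * S.c' * (v - u) ≤ S.rho n i v - S.rho n i u := by
  have := mul_sub_le_image_sub_of_le_deriv ((S.R_smooth i).differentiable (by norm_num))
    (fun x => (S.A4 i x).le) (show S.beta * u + S.x0 n ≤ S.beta * v + S.x0 n by
      nlinarith [S.beta_pos])
  simp only [rho]
  linarith

theorem rho_sub_le (n : ℕ) (i : Fin 2) {u v : ℝ} (huv : u ≤ v) :
    S.rho n i v - S.rho n i u ≤ S.kappa * (S.beta * (v - u) + 1) := by
  have hR := sub_le_of_monotone_of_map_add_one
    (strictMono_of_deriv_pos (S.R_deriv_pos i)).monotone (Nat.cast_nonneg _) (S.R_equiv i)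
    (S.beta * u + S.x0 n) (S.beta * v + S.x0 n)
  have hdeg : (S.deg i : ℝ) ≤ S.kappa := by exact_mod_cast S.deg_le_kappa i
  have : 0 ≤ S.beta * (v - u) + 1 := by nlinarith [S.beta_pos]
  simp only [rho]
  nlinarith

/-- Only the open interval is constrained: pieces are cut where `τ ∘ ψ` may jump. -/
structure IsLift (n : ℕ) (P : Piece) : Prop where
  le : P.s ≤ P.e
  continuousOn : ∀ i, ContinuousOn (P.F i) (Icc P.s P.e)
  monotoneOn : ∀ i, MonotoneOn (P.F i) (Icc P.s P.e)
  coeT_eq : ∀ i, ∀ u ∈ Ioo P.s P.e, coeT (P.F i u) = coord i (S.theta n u)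

def psiLift (n : ℕ) (P : Piece) (i : Fin 2) (u : ℝ) : ℝ := P.F i u + S.rho n i u

/-- The number of half-integers crossed by the lifts of `ψ_n` over a piece. -/
def cost (n : ℕ) (P : Piece) : ℤ :=
  ∑ i, (⌊2 * S.psiLift n P i P.e⌋ - ⌊2 * S.psiLift n P i P.s⌋)

def totalCost (n : ℕ) (L : List Piece) : ℤ := (L.map fun P => S.cost n P + 1).sum

def crossings (n : ℕ) (P : Piece) : Set ℝ :=
  {u ∈ Ioo P.s P.e | ∃ i, ∃ m : ℤ, 2 * S.psiLift n P i u = m}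

def rhoFloor (n : ℕ) (x : ℝ) : ℤ := ∑ i, ⌊2 * S.rho n i x⌋

/-- The piece of `θ_{n+1}` cut out of `P` over `[a, b]` costs at most `ceilPot b - floorPot a`,
and at a crossing the two potentials differ by at most one. -/
def floorPot (n : ℕ) (P : Piece) (x : ℝ) : ℤ :=
  (∑ i, ⌊2 * S.psiLift n P i x⌋) + S.rhoFloor (n + 1) (Real.exp S.lam * x)

def ceilPot (n : ℕ) (P : Piece) (x : ℝ) : ℤ :=
  (∑ i, ⌈2 * S.psiLift n P i x⌉) + S.rhoFloor (n + 1) (Real.exp S.lam * x)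

variable {S} {n : ℕ} {P : Piece}

theorem coord_psi (n : ℕ) (i : Fin 2) (u : ℝ) :
    coord i (S.psi n u) = coord i (S.theta n u) + S.rT i (S.iota n u) := by
  fin_cases i <;> rfl

theorem coord_theta_succ (n : ℕ) (i : Fin 2) (w : ℝ) :
    coord i (S.theta (n + 1) w) =
      S.gT i (S.tauT (S.psi n (Real.exp (-S.lam) * w)))
        (coord i (S.psi n (Real.exp (-S.lam) * w))) := by
  fin_cases i <;> rfl

theorem crossings_restrict {s e : ℝ} (hs : P.s ≤ s) (he : e ≤ P.e) :
    S.crossings n ⟨s, e, P.F⟩ = S.crossings n P ∩ Ioo s e := by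
  ext u
  simp only [crossings, psiLift, mem_inter_iff, mem_ofPred_eq, mem_Ioo]
  constructor
  · rintro ⟨hu, h⟩; exact ⟨⟨⟨hs.trans_lt hu.1, hu.2.trans_le he⟩, h⟩, hu⟩
  · rintro ⟨⟨-, h⟩, hu⟩; exact ⟨hu, h⟩

theorem ceilPot_le_floorPot_add_two (x : ℝ) : S.ceilPot n P x ≤ S.floorPot n P x + 2 := by
  simp only [ceilPot, floorPot, Fin.sum_univ_two]
  linarith [Int.ceil_le_floor_add_one (2 * S.psiLift n P 0 x),
    Int.ceil_le_floor_add_one (2 * S.psiLift n P 1 x)]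

theorem ceilPot_le_floorPot_add_one {x : ℝ} (hx : ∃ i, ∃ m : ℤ, 2 * S.psiLift n P i x = m) :
    S.ceilPot n P x ≤ S.floorPot n P x + 1 := by
  obtain ⟨i, m, hm⟩ := hx
  have hi : ⌈2 * S.psiLift n P i x⌉ = ⌊2 * S.psiLift n P i x⌋ := by
    rw [hm, Int.ceil_intCast, Int.floor_intCast]
  have h0 := Int.ceil_le_floor_add_one (2 * S.psiLift n P 0 x)
  have h1 := Int.ceil_le_floor_add_one (2 * S.psiLift n P 1 x)
  simp only [ceilPot, floorPot, Fin.sum_univ_two]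
  fin_cases i <;> simp only [Fin.zero_eta, Fin.mk_one] at hi <;> omega

theorem floorPot_sub_floorPot (S : Setting) (n : ℕ) (P : Piece) :
    S.floorPot n P P.e - S.floorPot n P P.s = S.cost n P +
      (S.rhoFloor (n + 1) (Real.exp S.lam * P.e) - S.rhoFloor (n + 1) (Real.exp S.lam * P.s)) := by
  simp only [floorPot, cost, Finset.sum_sub_distrib]
  ring

theorem totalCost_append (S : Setting) (n : ℕ) (L M : List Piece) :
    S.totalCost n (L ++ M) = S.totalCost n L + S.totalCost n M := by
  simp [totalCost]

theorem totalCost_cons (S : Setting) (n : ℕ) (P : Piece) (L : List Piece) :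
    S.totalCost n (P :: L) = S.cost n P + 1 + S.totalCost n L := by
  simp [totalCost]

namespace IsLift

theorem psi_eq (hP : S.IsLift n P) (i : Fin 2) {u : ℝ} (hu : u ∈ Ioo P.s P.e) :
    coord i (S.psi n u) = coeT (S.psiLift n P i u) := by
  rw [coord_psi, ← hP.coeT_eq i u hu, rT_iota, psiLift, coeT, coeT, coeT, AddCircle.coe_add]

theorem psiLift_sub_ge (hP : S.IsLift n P) (i : Fin 2) {u v : ℝ} (hu : u ∈ Icc P.s P.e)
    (hv : v ∈ Icc P.s P.e) (huv : u ≤ v) :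
    S.beta * S.c' * (v - u) ≤ S.psiLift n P i v - S.psiLift n P i u := by
  simp only [psiLift]
  linarith [hP.monotoneOn i hu hv huv, S.rho_sub_ge n i huv]

theorem psiLift_strictMonoOn (hP : S.IsLift n P) (i : Fin 2) :
    StrictMonoOn (S.psiLift n P i) (Icc P.s P.e) := fun u hu v hv huv => by
  have := hP.psiLift_sub_ge i hu hv huv.le
  have : 0 < S.beta * S.c' * (v - u) := by
    have := S.beta_pos; have := S.c'_pos; have : 0 < v - u := by linarith
    positivity
  linarith

theorem continuousOn_psiLift (hP : S.IsLift n P) (i : Fin 2) :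
    ContinuousOn (S.psiLift n P i) (Icc P.s P.e) :=
  (hP.continuousOn i).add ((S.R_smooth i).continuous.comp (by fun_prop)).continuousOn

theorem floor_sub_floor_nonneg (hP : S.IsLift n P) (i : Fin 2) :
    0 ≤ ⌊2 * S.psiLift n P i P.e⌋ - ⌊2 * S.psiLift n P i P.s⌋ := by
  have := (hP.psiLift_strictMonoOn i).monotoneOn (left_mem_Icc.2 hP.le) (right_mem_Icc.2 hP.le)
    hP.le
  have := Int.floor_mono (show 2 * S.psiLift n P i P.s ≤ 2 * S.psiLift n P i P.e by linarith)
  omega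

theorem floor_sub_floor_le_cost (hP : S.IsLift n P) (i : Fin 2) :
    ⌊2 * S.psiLift n P i P.e⌋ - ⌊2 * S.psiLift n P i P.s⌋ ≤ S.cost n P :=
  Finset.single_le_sum (f := fun j => ⌊2 * S.psiLift n P j P.e⌋ - ⌊2 * S.psiLift n P j P.s⌋)
    (fun j _ => hP.floor_sub_floor_nonneg j) (Finset.mem_univ i)

theorem cost_nonneg (hP : S.IsLift n P) : 0 ≤ S.cost n P :=
  Finset.sum_nonneg fun j _ => hP.floor_sub_floor_nonneg j

theorem restrict (hP : S.IsLift n P) {s e : ℝ} (hs : P.s ≤ s) (hse : s ≤ e) (he : e ≤ P.e) :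
    S.IsLift n ⟨s, e, P.F⟩ where
  le := hse
  continuousOn i := (hP.continuousOn i).mono (Icc_subset_Icc hs he)
  monotoneOn i := (hP.monotoneOn i).mono (Icc_subset_Icc hs he)
  coeT_eq i u hu := hP.coeT_eq i u (Ioo_subset_Ioo hs he hu)

theorem exists_finset_crossings (hP : S.IsLift n P) :
    ∃ C : Finset ℝ, ↑C = S.crossings n P ∧ (C.card : ℤ) ≤ S.cost n P := by
  have h := fun i => finite_and_ncard_halfInt_preimage_le hP.le (hP.psiLift_strictMonoOn i)
  have hunion : S.crossings n P = {u ∈ Ioo P.s P.e | ∃ m : ℤ, 2 * S.psiLift n P 0 u = m} ∪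
      {u ∈ Ioo P.s P.e | ∃ m : ℤ, 2 * S.psiLift n P 1 u = m} := by
    ext u
    simp only [crossings, Fin.exists_fin_two, mem_ofPred_eq, mem_union]
    tauto
  have hfin : (S.crossings n P).Finite := hunion ▸ (h 0).1.union (h 1).1
  refine ⟨hfin.toFinset, hfin.coe_toFinset, ?_⟩
  rw [← ncard_eq_toFinset_card _ hfin, cost, Fin.sum_univ_two]
  have := ncard_union_le {u ∈ Ioo P.s P.e | ∃ m : ℤ, 2 * S.psiLift n P 0 u = m}
    {u ∈ Ioo P.s P.e | ∃ m : ℤ, 2 * S.psiLift n P 1 u = m}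
  rw [← hunion] at this
  have := (h 0).2
  have := (h 1).2
  omega

theorem half_lt_rep_psi_iff (hP : S.IsLift n P) (i : Fin 2) {u : ℝ} (hu : u ∈ Ioo P.s P.e)
    (hC : u ∉ S.crossings n P) :
    1 / 2 < rep (coord i (S.psi n u)) ↔ Odd ⌊2 * S.psiLift n P i u⌋ := by
  rw [hP.psi_eq i hu, rep_coeT]
  exact half_lt_fract_iff_odd_floor fun m hm => hC ⟨hu, i, m, hm⟩

theorem tauT_psi_eq (hP : S.IsLift n P) (hC : S.crossings n P = ∅) {v w : ℝ}
    (hv : v ∈ Ioo P.s P.e) (hw : w ∈ Ioo P.s P.e) :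
    S.tauT (S.psi n v) = S.tauT (S.psi n w) := by
  have hcross : ∀ u, u ∉ S.crossings n P := fun u => hC ▸ notMem_empty u
  have hfloor : ∀ i {v w}, v ∈ Ioo P.s P.e → w ∈ Ioo P.s P.e → v ≤ w →
      ⌊2 * S.psiLift n P i v⌋ = ⌊2 * S.psiLift n P i w⌋ := fun i v w hv hw hvw =>
    floor_eq_floor_of_forall_ne_intCast (h := fun x => 2 * S.psiLift n P i x) hvw
      (continuousOn_const.mul ((hP.continuousOn_psiLift i).mono
        (Icc_subset_Icc hv.1.le hw.2.le)))
      fun x hx m hm => hcross x ⟨⟨hv.1.trans_le hx.1, hx.2.trans_lt hw.2⟩, i, m, hm⟩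
  have hrep : ∀ i, 1 / 2 < rep (coord i (S.psi n v)) ↔ 1 / 2 < rep (coord i (S.psi n w)) := by
    intro i
    rw [hP.half_lt_rep_psi_iff i hv (hcross v), hP.half_lt_rep_psi_iff i hw (hcross w)]
    rcases le_total v w with hvw | hvw
    · rw [hfloor i hv hw hvw]
    · rw [hfloor i hw hv hvw]
  have h0 : 1 / 2 < rep (S.psi n v).1 ↔ 1 / 2 < rep (S.psi n w).1 := hrep 0
  have h1 : 1 / 2 < rep (S.psi n v).2 ↔ 1 / 2 < rep (S.psi n w).2 := hrep 1
  simp only [Base.tauT, cnt, h0, h1]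

/-- Between consecutive crossings, `τ ∘ ψ_n` is constant and the flow `g^τ` keeps each lift in
its half-cell, so `θ_{n+1}` has a single piece over the rescaled interval. -/
theorem exists_next_of_crossings_eq_empty (hP : S.IsLift n P) (hC : S.crossings n P = ∅) :
    ∃ Q : Piece, Q.s = Real.exp S.lam * P.s ∧ Q.e = Real.exp S.lam * P.e ∧
      S.IsLift (n + 1) Q ∧ S.cost (n + 1) Q ≤ S.ceilPot n P P.e - S.floorPot n P P.s := by
  set μ := Real.exp S.lam
  set τ := S.tauT (S.psi n ((P.s + P.e) / 2))
  have hinv : ∀ x, Real.exp (-S.lam) * (μ * x) = x := fun x => by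
    rw [← mul_assoc, ← Real.exp_add, neg_add_cancel, Real.exp_zero, one_mul]
  refine ⟨⟨μ * P.s, μ * P.e, fun i w => S.G i τ (S.psiLift n P i (Real.exp (-S.lam) * w))⟩,
    rfl, rfl, ⟨?_, fun i => ?_, fun i => ?_, fun i w hw => ?_⟩, ?_⟩
  · exact mul_le_mul_of_nonneg_left hP.le (Real.exp_pos _).le
  · exact (S.G_continuous i τ).comp_continuousOn ((hP.continuousOn_psiLift i).comp
      (by fun_prop) fun w hw => exp_neg_mul_mem_Icc hw)
  · exact fun v hv w hw hvw => S.G_strictMono i τ |>.monotone <|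
      (hP.psiLift_strictMonoOn i).monotoneOn (exp_neg_mul_mem_Icc hv) (exp_neg_mul_mem_Icc hw)
        (mul_le_mul_of_nonneg_left hvw (Real.exp_pos _).le)
  · have hu := exp_neg_mul_mem_Ioo hw
    have hmid : (P.s + P.e) / 2 ∈ Ioo P.s P.e :=
      ⟨by linarith [hu.1, hu.2], by linarith [hu.1, hu.2]⟩
    rw [coord_theta_succ, hP.tauT_psi_eq hC hu hmid, hP.psi_eq i hu, Base.gT_coeT]
  · have h0e := S.floor_two_mul_G_add_le 0 τ (S.psiLift n P 0 P.e) (S.rho (n + 1) 0 (μ * P.e))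
    have h1e := S.floor_two_mul_G_add_le 1 τ (S.psiLift n P 1 P.e) (S.rho (n + 1) 1 (μ * P.e))
    have h0s := S.le_floor_two_mul_G_add 0 τ (S.psiLift n P 0 P.s) (S.rho (n + 1) 0 (μ * P.s))
    have h1s := S.le_floor_two_mul_G_add 1 τ (S.psiLift n P 1 P.s) (S.rho (n + 1) 1 (μ * P.s))
    simp only [cost, ceilPot, floorPot, rhoFloor, Fin.sum_univ_two]
    simp only [psiLift, hinv] at h0e h1e h0s h1s ⊢
    linarith

theorem exists_refinement_of_crossings_eq (C : Finset ℝ) :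
    ∀ P : Piece, S.IsLift n P → S.crossings n P = C →
      ∃ Qs : List Piece,
        Piece.Spans Qs (Real.exp S.lam * P.s) (Real.exp S.lam * P.e) ∧
        (∀ Q ∈ Qs, S.IsLift (n + 1) Q) ∧
        S.totalCost (n + 1) Qs ≤ S.ceilPot n P P.e - S.floorPot n P P.s + 2 * C.card + 1 := by
  induction C using Finset.induction_on_max with
  | empty =>
    intro P hP hC
    obtain ⟨Q, hs, he, hQ, hcost⟩ := hP.exists_next_of_crossings_eq_empty (by simpa using hC)
    refine ⟨[Q], ⟨hs, he⟩, by simpa using hQ, ?_⟩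
    simp only [totalCost, List.map_cons, List.map_nil, List.sum_cons, List.sum_nil,
      Finset.card_empty]
    linarith
  | insert a C hlt ih =>
    -- split at the last crossing `a`: no crossing is left to its right
    intro P hP hC
    have ha : a ∈ S.crossings n P := hC ▸ Finset.mem_coe.2 (Finset.mem_insert_self a C)
    obtain ⟨⟨has, hae⟩, hcross⟩ := ha
    have hCl : S.crossings n ⟨P.s, a, P.F⟩ = C := by
      rw [crossings_restrict le_rfl hae.le, hC]
      ext u
      simp only [Finset.coe_insert, mem_inter_iff, mem_insert_iff, Finset.mem_coe, mem_Ioo]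
      constructor
      · rintro ⟨rfl | h, -, hu⟩
        · exact absurd hu (lt_irrefl _)
        · exact h
      · intro h
        have : u ∈ S.crossings n P := hC ▸ Finset.mem_coe.2 (Finset.mem_insert_of_mem h)
        exact ⟨Or.inr h, this.1.1, hlt u h⟩
    have hCr : S.crossings n ⟨a, P.e, P.F⟩ = ∅ := by
      rw [crossings_restrict has.le le_rfl, hC]
      ext u
      simp only [Finset.coe_insert, mem_inter_iff, mem_insert_iff, Finset.mem_coe, mem_Ioo,
        mem_empty_iff_false, iff_false, not_and]
      rintro (rfl | h) hu
      · exact fun _ => lt_irrefl _ hu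
      · exact fun _ => lt_asymm (hlt u h) hu
    obtain ⟨Ql, hQl, hliftl, hcostl⟩ := ih _ (hP.restrict le_rfl has.le hae.le) hCl
    obtain ⟨Q, hs, he, hQ, hcost⟩ :=
      (hP.restrict has.le hae.le le_rfl).exists_next_of_crossings_eq_empty hCr
    refine ⟨Ql ++ [Q], hQl.append ⟨hs, he⟩, ?_, ?_⟩
    · simp only [List.mem_append, List.mem_singleton]
      rintro R (hR | rfl)
      exacts [hliftl R hR, hQ]
    · have hpot := ceilPot_le_floorPot_add_one (S := S) (n := n) (P := P) hcross
      have hl : S.totalCost (n + 1) Ql ≤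
          S.ceilPot n P a - S.floorPot n P P.s + 2 * C.card + 1 := hcostl
      have hr : S.cost (n + 1) Q ≤ S.ceilPot n P P.e - S.floorPot n P a := hcost
      rw [totalCost_append, Finset.card_insert_of_notMem fun h => lt_irrefl a (hlt a h)]
      simp only [totalCost, List.map_cons, List.map_nil, List.sum_cons, List.sum_nil] at hl ⊢
      push_cast
      linarith

theorem exists_refinement (hP : S.IsLift n P) :
    ∃ Qs : List Piece,
      Piece.Spans Qs (Real.exp S.lam * P.s) (Real.exp S.lam * P.e) ∧
      (∀ Q ∈ Qs, S.IsLift (n + 1) Q) ∧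
      S.totalCost (n + 1) Qs ≤ 3 * (S.cost n P + 1) + (S.rhoFloor (n + 1) (Real.exp S.lam * P.e) -
        S.rhoFloor (n + 1) (Real.exp S.lam * P.s)) := by
  obtain ⟨C, hC, hcard⟩ := hP.exists_finset_crossings
  obtain ⟨Qs, hQs, hlift, hcost⟩ := exists_refinement_of_crossings_eq C P hP hC.symm
  refine ⟨Qs, hQs, hlift, ?_⟩
  linarith [ceilPot_le_floorPot_add_two (S := S) (n := n) (P := P) P.e, floorPot_sub_floorPot S n P]

end IsLift

theorem exists_refinement_list {L : List Piece} {a b : ℝ} (hL : Piece.Spans L a b)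
    (hP : ∀ P ∈ L, S.IsLift n P) :
    ∃ L' : List Piece,
      Piece.Spans L' (Real.exp S.lam * a) (Real.exp S.lam * b) ∧
      (∀ Q ∈ L', S.IsLift (n + 1) Q) ∧
      S.totalCost (n + 1) L' ≤ 3 * S.totalCost n L +
        (S.rhoFloor (n + 1) (Real.exp S.lam * b) - S.rhoFloor (n + 1) (Real.exp S.lam * a)) := by
  induction L generalizing a with
  | nil =>
    obtain rfl : a = b := hL
    exact ⟨[], rfl, by simp, by simp [totalCost]⟩
  | cons P L ih =>
    obtain ⟨rfl, hL⟩ := hL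
    obtain ⟨Qs, hQs, hliftQ, hcostQ⟩ := (hP P List.mem_cons_self).exists_refinement
    obtain ⟨L', hL', hliftL, hcostL⟩ := ih hL fun R hR => hP R (List.mem_cons_of_mem P hR)
    refine ⟨Qs ++ L', hQs.append hL', fun Q hQ => ?_, ?_⟩
    · rcases List.mem_append.1 hQ with h | h
      exacts [hliftQ Q h, hliftL Q h]
    · rw [totalCost_append, totalCost_cons]
      linarith

end Setting

namespace Base

variable (B : Base)

def crossingRate : ℝ := 4 * B.kappa * B.beta + (4 * B.kappa + 3) / B.a

/-- The solution `K` of `3 K + e^λ crossingRate = e^λ K`, so that `K e^{λ n}` bounds the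
total cost at every level. -/
def costRate : ℝ := B.crossingRate * Real.exp B.lam / (Real.exp B.lam - 3)

theorem crossingRate_nonneg : 0 ≤ B.crossingRate := by
  have := B.a_pos; have := B.beta_pos
  unfold crossingRate; positivity

theorem crossingRate_le_costRate (hlam : 3 < Real.exp B.lam) : B.crossingRate ≤ B.costRate := by
  rw [costRate, le_div_iff₀ (by linarith), mul_sub]
  nlinarith [B.crossingRate_nonneg]

theorem costRate_growth (hlam : 3 < Real.exp B.lam) :
    3 * B.costRate + B.crossingRate * Real.exp B.lam = B.costRate * Real.exp B.lam := by
  rw [costRate]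
  field_simp [show Real.exp B.lam - 3 ≠ 0 by linarith]
  ring

end Base

namespace Setting

variable (S : Setting)

theorem len_succ (n : ℕ) : S.len (n + 1) = Real.exp S.lam * S.len n := by
  rw [len, len, ← mul_assoc, ← Real.exp_add]
  push_cast
  ring_nf

theorem a_le_len (n : ℕ) : S.a ≤ S.len n :=
  le_mul_of_one_le_left S.a_pos.le (Real.one_le_exp (by have := S.lam_pos; positivity))

theorem len_pos (n : ℕ) : 0 < S.len n := S.a_pos.trans_le (S.a_le_len n)

theorem rhoFloor_sub_le (n : ℕ) {u v : ℝ} (huv : u ≤ v) :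
    ((S.rhoFloor n v - S.rhoFloor n u : ℤ) : ℝ) ≤
      4 * S.kappa * S.beta * (v - u) + 4 * S.kappa + 2 := by
  have h : ∀ i, ((⌊2 * S.rho n i v⌋ - ⌊2 * S.rho n i u⌋ : ℤ) : ℝ) ≤
      2 * (S.kappa * (S.beta * (v - u) + 1)) + 1 := fun i => by
    push_cast
    linarith [Int.floor_le (2 * S.rho n i v), Int.lt_floor_add_one (2 * S.rho n i u),
      S.rho_sub_le n i huv]
  have := add_le_add (h 0) (h 1)
  simp only [rhoFloor, Fin.sum_univ_two]
  push_cast at this ⊢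
  linarith

theorem rhoFloor_sub_add_one_le (n : ℕ) :
    ((S.rhoFloor n (S.len n) - S.rhoFloor n 0 + 1 : ℤ) : ℝ) ≤ S.crossingRate * S.len n := by
  have hlen := S.a_le_len n
  have hfrac : (4 * S.kappa + 3 : ℝ) ≤ (4 * S.kappa + 3) / S.a * S.len n := by
    rw [div_mul_eq_mul_div, le_div_iff₀ S.a_pos]
    exact mul_le_mul_of_nonneg_left hlen (by positivity)
  have := S.rhoFloor_sub_le n (S.a_pos.le.trans hlen)
  push_cast at this ⊢
  rw [Base.crossingRate, add_mul]
  linarith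

theorem exists_decomposition (hlam : 3 < Real.exp S.lam) (n : ℕ) :
    ∃ L : List Piece, Piece.Spans L 0 (S.len n) ∧ (∀ P ∈ L, S.IsLift n P) ∧
      (S.totalCost n L : ℝ) ≤ S.costRate * S.len n := by
  induction n with
  | zero =>
    refine ⟨[⟨0, S.len 0, fun _ _ => 0⟩], ⟨rfl, rfl⟩, ?_, ?_⟩
    · simp only [List.mem_singleton, forall_eq]
      refine ⟨(S.len_pos 0).le, fun _ => continuousOn_const,
        fun _ => monotoneOn_const, fun i u _ => ?_⟩
      fin_cases i <;> rfl
    · have hcost : S.totalCost 0 [⟨0, S.len 0, fun _ _ => 0⟩] =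
          S.rhoFloor 0 (S.len 0) - S.rhoFloor 0 0 + 1 := by
        simp only [totalCost, cost, psiLift, rhoFloor, zero_add, Finset.sum_sub_distrib,
          List.map_cons, List.map_nil, List.sum_cons, List.sum_nil, add_zero]
      rw [hcost]
      calc _ ≤ S.crossingRate * S.len 0 := S.rhoFloor_sub_add_one_le 0
        _ ≤ S.costRate * S.len 0 :=
          mul_le_mul_of_nonneg_right (S.crossingRate_le_costRate hlam) (S.len_pos 0).le
  | succ n ih =>
    obtain ⟨L, hL, hlift, hcost⟩ := ih
    obtain ⟨L', hL', hlift', hcost'⟩ := exists_refinement_list hL hlift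
    rw [mul_zero, ← S.len_succ] at hL' hcost'
    refine ⟨L', hL', hlift', ?_⟩
    have hrho := S.rhoFloor_sub_add_one_le (n + 1)
    have hgrowth := S.costRate_growth hlam
    have hcast : (S.totalCost (n + 1) L' : ℝ) ≤ 3 * S.totalCost n L +
        ((S.rhoFloor (n + 1) (S.len (n + 1)) - S.rhoFloor (n + 1) 0 : ℤ) : ℝ) := by
      exact_mod_cast hcost'
    have hlen : S.costRate * S.len (n + 1) =
        3 * (S.costRate * S.len n) + S.crossingRate * S.len (n + 1) := by
      rw [S.len_succ]
      linear_combination (-S.len n) * hgrowth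
    push_cast at hrho hcast
    linarith

end Setting

namespace Setting

variable {S : Setting} {n : ℕ} {P : Piece}

theorem IsLift.volume_near_halfInt_le (hP : S.IsLift n P) (i : Fin 2) {ξ : ℝ} (hξ₀ : 0 ≤ ξ)
    (hξ : ξ ≤ 1 / 2) :
    volume {u ∈ Ioo P.s P.e | ∃ m : ℤ, |S.psiLift n P i u - m / 2| ≤ ξ} ≤
      ENNReal.ofReal (6 * ξ / (S.beta * S.c') * (S.cost n P + 1 : ℤ)) := by
  have hc : 0 < S.beta * S.c' := mul_pos S.beta_pos S.c'_pos
  set Ψ := S.psiLift n P i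
  set M := Finset.Icc (⌊2 * Ψ P.s⌋ - 1) (⌊2 * Ψ P.e⌋ + 1)
  have hsub : {u ∈ Ioo P.s P.e | ∃ m : ℤ, |Ψ u - m / 2| ≤ ξ} ⊆
      ⋃ m ∈ M, {u ∈ Ioo P.s P.e | |Ψ u - (m / 2 : ℝ)| ≤ ξ} := by
    rintro u ⟨hu, m, hm⟩
    have hm := abs_le.mp hm
    have hu' := Ioo_subset_Icc_self hu
    have h1 := (hP.psiLift_strictMonoOn i).monotoneOn (left_mem_Icc.2 hP.le) hu' hu'.1
    have h2 := (hP.psiLift_strictMonoOn i).monotoneOn hu' (right_mem_Icc.2 hP.le) hu'.2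
    refine mem_biUnion (Finset.mem_Icc.2 ⟨?_, ?_⟩) ⟨hu, abs_le.2 hm⟩
    · exact Int.cast_le (R := ℝ) |>.mp (by push_cast; linarith [Int.floor_le (2 * Ψ P.s)])
    · exact Int.le_of_lt_add_one (Int.cast_lt (R := ℝ) |>.mp (by
        push_cast; linarith [Int.lt_floor_add_one (2 * Ψ P.e)]))
  have hcard : (M.card : ℝ) ≤ 3 * (S.cost n P + 1 : ℤ) := by
    have : 0 ≤ ⌊2 * Ψ P.e⌋ - ⌊2 * Ψ P.s⌋ := hP.floor_sub_floor_nonneg i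
    have : ⌊2 * Ψ P.e⌋ - ⌊2 * Ψ P.s⌋ ≤ S.cost n P := hP.floor_sub_floor_le_cost i
    have hM : (M.card : ℤ) = ⌊2 * Ψ P.e⌋ - ⌊2 * Ψ P.s⌋ + 3 := by rw [Int.card_Icc]; omega
    exact_mod_cast (show (M.card : ℤ) ≤ 3 * (S.cost n P + 1) by omega)
  calc volume {u ∈ Ioo P.s P.e | ∃ m : ℤ, |Ψ u - m / 2| ≤ ξ}
      ≤ ∑ m ∈ M, volume {u ∈ Ioo P.s P.e | |Ψ u - (m / 2 : ℝ)| ≤ ξ} :=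
        (measure_mono hsub).trans (measure_biUnion_finset_le _ _)
    _ ≤ ∑ _m ∈ M, ENNReal.ofReal (2 * ξ / (S.beta * S.c')) :=
        Finset.sum_le_sum fun m _ => volume_abs_sub_le_le hc
          (fun u hu v hv => hP.psiLift_sub_ge i (Ioo_subset_Icc_self hu) (Ioo_subset_Icc_self hv))
          _ _
    _ = ENNReal.ofReal (M.card * (2 * ξ / (S.beta * S.c'))) := by
        rw [Finset.sum_const, nsmul_eq_mul, ENNReal.ofReal_mul (Nat.cast_nonneg _),
          ENNReal.ofReal_natCast]
    _ ≤ ENNReal.ofReal (6 * ξ / (S.beta * S.c') * (S.cost n P + 1 : ℤ)) := by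
        refine ENNReal.ofReal_le_ofReal ?_
        calc (M.card : ℝ) * (2 * ξ / (S.beta * S.c'))
            ≤ 3 * (S.cost n P + 1 : ℤ) * (2 * ξ / (S.beta * S.c')) := by gcongr
          _ = _ := by ring

theorem volume_near_poles_le (hlam : 3 < Real.exp S.lam) (n : ℕ) (i : Fin 2) {ξ : ℝ}
    (hξ₀ : 0 ≤ ξ) (hξ : ξ ≤ 1 / 2) :
    volume {u : ℝ | u ∈ Icc 0 (S.len n) ∧
        (dist (S.psiI n i u) (coeT 0) ≤ ξ ∨ dist (S.psiI n i u) (coeT (1 / 2)) ≤ ξ)} ≤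
      ENNReal.ofReal (6 * S.costRate / (S.beta * S.c') * ξ * S.len n) := by
  obtain ⟨L, hL, hlift, hcost⟩ := S.exists_decomposition hlam n
  set near := fun P : Piece => {u ∈ Ioo P.s P.e | ∃ m : ℤ, |S.psiLift n P i u - m / 2| ≤ ξ}
  have hsub : {u : ℝ | u ∈ Icc 0 (S.len n) ∧
      (dist (S.psiI n i u) (coeT 0) ≤ ξ ∨ dist (S.psiI n i u) (coeT (1 / 2)) ≤ ξ)} ⊆
      {x | x ∈ S.len n :: L.map Piece.s} ∪ ⋃ P ∈ L, near P := by
    rintro u ⟨hu, hnear⟩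
    refine (hL.Icc_subset hu).imp id fun h => ?_
    obtain ⟨P, hP, huP⟩ := mem_iUnion₂.1 h
    refine mem_biUnion hP ⟨huP, exists_abs_sub_halfInt_le ?_⟩
    rwa [psiI, ← coord, (hlift P hP).psi_eq i huP] at hnear
  have hc : 0 < S.beta * S.c' := mul_pos S.beta_pos S.c'_pos
  calc _ ≤ volume ({x | x ∈ S.len n :: L.map Piece.s} ∪ ⋃ P ∈ L, near P) := measure_mono hsub
    _ ≤ volume (⋃ P ∈ L, near P) := by
        refine (measure_union_le _ _).trans ?_
        rw [(List.finite_toSet _).measure_zero, zero_add]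
    _ ≤ ENNReal.ofReal (L.map fun P => 6 * ξ / (S.beta * S.c') * (S.cost n P + 1 : ℤ)).sum :=
        measure_biUnion_list_le_ofReal _ _ _ _
          (fun P hP => mul_nonneg (by positivity) (by
            exact_mod_cast (by linarith [(hlift P hP).cost_nonneg] : (0 : ℤ) ≤ S.cost n P + 1)))
          fun P hP => (hlift P hP).volume_near_halfInt_le i hξ₀ hξ
    _ ≤ ENNReal.ofReal (6 * S.costRate / (S.beta * S.c') * ξ * S.len n) := by
        refine ENNReal.ofReal_le_ofReal ?_
        have hsum : (L.map fun P => ((S.cost n P + 1 : ℤ) : ℝ)).sum = S.totalCost n L := by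
          rw [totalCost, Int.cast_list_sum, List.map_map]; rfl
        rw [List.sum_map_mul_left, hsum]
        calc 6 * ξ / (S.beta * S.c') * (S.totalCost n L : ℝ)
            ≤ 6 * ξ / (S.beta * S.c') * (S.costRate * S.len n) := by gcongr
          _ = _ := by ring

end Setting

theorem stmt_16 (B : Base) (hlam : 3 < Real.exp B.lam) :
    ∃ c₃ : ℝ, 0 < c₃ ∧ ∀ S : Setting, S.toBase = B →
      ∀ (n : ℕ) (i : Fin 2), ∀ ξ : ℝ, 0 < ξ →
        volume {u : ℝ | u ∈ Icc 0 (S.len n) ∧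
            (dist (S.psiI n i u) (coeT 0) ≤ ξ ∨ dist (S.psiI n i u) (coeT (1/2)) ≤ ξ)}
          ≤ ENNReal.ofReal (c₃ * ξ * S.len n) := by
  refine ⟨max 2 (6 * B.costRate / (B.beta * B.c')), by positivity, ?_⟩
  rintro S rfl n i ξ hξ
  have hlen := S.len_pos n
  rcases le_or_gt ξ (1 / 2) with hξ' | hξ'
  · refine (S.volume_near_poles_le hlam n i hξ.le hξ').trans (ENNReal.ofReal_le_ofReal ?_)
    gcongr
    exact le_max_right _ _
  · calc _ ≤ volume (Icc 0 (S.len n)) := measure_mono fun u hu => hu.1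
      _ = ENNReal.ofReal (S.len n) := by rw [Real.volume_Icc, sub_zero]
      _ ≤ _ := ENNReal.ofReal_le_ofReal (le_mul_of_one_le_left hlen.le
          (by nlinarith [le_max_left 2 (6 * S.costRate / (S.beta * S.c'))]))

end
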